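/- arXiv:1307.5170 — 3 statements merged into one kernel-verified Lean document; each statement's English description precedes it below -/
import Mathlib

section
/- Let A be a commutative ring, let d ≥ 1 be an integer, and let M₁, …, M_{d+1} be d×d matrices over A. For a permutation σ in the symmetric group S_{d+1}, define T^σ(M₁,…,M_{d+1}) as the product, over the cycles (i₁ i₂ … i_r) of σ (fixed points counted as 1-cycles), of the traces tr(M_{i₁} M_{i₂} ⋯ M_{i_r}). Then ∑_{σ ∈ S_{d+1}} ε(σ) · T^σ(M₁,…,M_{d+1}) = 0, where ε(σ) is the signature of σ. In particular, for any group G and any group homomorphism ρ: G → GL_d(A), the function T = tr ∘ ρ satisfies ∑_{σ ∈ S_{d+1}} ε(σ) T^σ(g₁,…,g_{d+1}) = 0 for all g₁,…,g_{d+1} ∈ G, i.e. T is a pseudocharacter of dimension d. -/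
open scoped Classical

/-- Given a function `T` on a monoid `M` with values in a commutative monoid `A`,
a family `x : Fin n → M` and a permutation `σ` of `Fin n`, this is
`T^σ(x₁, …, xₙ) = ∏_{cycles (i₁ i₂ … i_r) of σ} T (x_{i₁} * x_{i₂} * ⋯ * x_{i_r})`,
fixed points counted as 1-cycles.  Each cycle is traversed starting from its minimal
element; the contribution of the orbit of `i` is recorded at the minimum of the orbit. -/
noncomputable def permCycleProd {M : Type*} [Monoid M] {A : Type*} [CommMonoid A]
    (T : M → A) {n : ℕ} (x : Fin n → M) (σ : Equiv.Perm (Fin n)) : A :=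
  ∏ i : Fin n,
    if ∀ k : ℕ, i ≤ (σ ^ k) i then
      T (((List.range ((Finset.range n).image fun k => (σ ^ k) i).card).map
            fun k => x ((σ ^ k) i)).prod)
    else 1

/-!
Expanding the trace of a product of matrices as a sum over closed walks of indices turns
`T^σ(M₁, …, Mₙ)` into `∑_{φ : [n] → [d]} ∏_j (M_j)_{φ j, φ (σ j)}`. For fixed `φ`, the signed
sum of these terms over `σ` is the determinant of the `n × n` matrix `((M_j)_{φ j, φ j'})_{j, j'}`,
and when `n > d` the map `φ` is not injective, so this matrix has two equal columns.
The statement for `tr ∘ ρ` is the one for the matrices `ρ(g_i)`.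
-/

theorem val_finRotate {p : ℕ} (k : Fin p) : (finRotate p k : ℕ) = (k + 1) % p := by
  simp [finRotate_apply, Fin.val_add]

theorem Fin.snoc_tail_zero_eq_comp_finRotate {p : ℕ} {α : Type*} (u : Fin (p + 1) → α) :
    Fin.snoc (Fin.tail u) (u 0) = u ∘ finRotate (p + 1) := by
  funext k
  induction k using Fin.lastCases with
  | last => simp
  | cast k => simp [finRotate_apply, Fin.coeSucc_eq_succ, Fin.tail]

namespace Matrix

variable {ι R : Type*} [Fintype ι]

section CommSemiring

variable [CommSemiring R]

theorem list_prod_ofFn_apply [DecidableEq ι] {p : ℕ} (N : Fin (p + 1) → Matrix ι ι R) (a b : ι) :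
    (List.ofFn N).prod a b =
      ∑ v : Fin p → ι,
        ∏ k, N k ((Fin.cons a v : Fin (p + 1) → ι) k) ((Fin.snoc v b : Fin (p + 1) → ι) k) := by
  induction p generalizing a with
  | zero => simp [Fin.snoc]
  | succ p ih =>
    rw [List.ofFn_succ, List.prod_cons, mul_apply, ← (Fin.consEquiv fun _ => ι).sum_comp,
      Fintype.sum_prod_type]
    refine Finset.sum_congr rfl fun c _ => ?_
    rw [ih, Finset.mul_sum]
    refine Finset.sum_congr rfl fun w _ => ?_
    simp only [Fin.consEquiv, Equiv.coe_fn_mk, ← Fin.cons_snoc_eq_snoc_cons]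
    conv_rhs => rw [Fin.prod_univ_succ]
    simp only [Fin.cons_zero, Fin.cons_succ]

/-- For a cyclic `σ` this is the trace of the product of the `N_b` taken along the cycle
(`permTrace_finRotate`); in general it is the product of such traces over the cycles. -/
noncomputable def permTrace {β : Type*} [Fintype β] [DecidableEq β] (σ : Equiv.Perm β)
    (N : β → Matrix ι ι R) : R :=
  ∑ φ : β → ι, ∏ b, N b (φ b) (φ (σ b))

theorem permTrace_finRotate [DecidableEq ι] {p : ℕ} (hp : p ≠ 0) (N : Fin p → Matrix ι ι R) :
    permTrace (finRotate p) N = (List.ofFn N).prod.trace := by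
  obtain ⟨q, rfl⟩ := Nat.exists_eq_add_one_of_ne_zero hp
  rw [trace, permTrace, ← (Fin.consEquiv fun _ => ι).sum_comp, Fintype.sum_prod_type]
  refine Finset.sum_congr rfl fun a _ => ?_
  rw [diag_apply, list_prod_ofFn_apply]
  refine Finset.sum_congr rfl fun v _ => ?_
  have hrot := Fin.snoc_tail_zero_eq_comp_finRotate (Fin.cons a v : Fin (q + 1) → ι)
  simp only [Fin.tail_cons, Fin.cons_zero] at hrot
  simp [Fin.consEquiv, hrot]

theorem permTrace_sigmaCongrRight {κ : Type*} {β : κ → Type*} [Fintype κ] [DecidableEq κ]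
    [∀ i, Fintype (β i)] [∀ i, DecidableEq (β i)]
    (τ : ∀ i, Equiv.Perm (β i)) (N : (Σ i, β i) → Matrix ι ι R) :
    permTrace (Equiv.Perm.sigmaCongrRight τ) N = ∏ i, permTrace (τ i) fun b => N ⟨i, b⟩ := by
  simp only [permTrace, Fintype.prod_sum, ← (Equiv.piCurry fun _ _ => ι).symm.sum_comp,
    Fintype.prod_sigma]
  rfl

theorem permTrace_of_semiconj {β γ : Type*} [Fintype β] [DecidableEq β] [Fintype γ]
    [DecidableEq γ] (e : β ≃ γ) {σ : Equiv.Perm γ} {τ : Equiv.Perm β} (h : ∀ b, σ (e b) = e (τ b)) (N : γ → Matrix ι ι R) :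
    permTrace σ N = permTrace τ (N ∘ e) := by
  refine Fintype.sum_equiv (e.symm.arrowCongr (Equiv.refl ι)) _ _ fun φ => ?_
  rw [← e.prod_comp]
  simp [h]

end CommSemiring

theorem sum_sign_mul_permTrace_eq_zero {β : Type*} [CommRing R] [Fintype β] [DecidableEq β]
    (N : β → Matrix ι ι R) (h : Fintype.card ι < Fintype.card β) :
    ∑ σ : Equiv.Perm β, (Equiv.Perm.sign σ : R) * permTrace σ N = 0 := by
  simp only [permTrace, Finset.mul_sum]
  rw [Finset.sum_comm]
  refine Finset.sum_eq_zero fun φ _ => ?_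
  obtain ⟨a, b, hab, hφ⟩ := Fintype.exists_ne_map_eq_of_card_lt φ h
  have hdet : ∑ σ : Equiv.Perm β, (Equiv.Perm.sign σ : R) * ∏ c, N c (φ c) (φ (σ c)) =
      (of fun c c' => N c (φ c) (φ c')).transpose.det := by
    rw [det_apply']
    rfl
  rw [hdet, det_transpose]
  exact det_zero_of_column_eq hab fun c => by simp [hφ]

end Matrix

namespace Equiv.Perm

open Function

variable {α : Type*} (σ : Perm α)

theorem pow_apply_mod_minimalPeriod (k : ℕ) (i : α) :
    (σ ^ (k % minimalPeriod σ i)) i = (σ ^ k) i := by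
  simpa only [iterate_eq_pow] using iterate_mod_minimalPeriod_eq (f := σ) (x := i) (n := k)

theorem pow_apply_injOn_Iio_minimalPeriod (i : α) :
    Set.InjOn (fun k : ℕ => (σ ^ k) i) (Set.Iio (minimalPeriod σ i)) := by
  simpa only [iterate_eq_pow] using iterate_injOn_Iio_minimalPeriod (f := σ) (x := i)

theorem minimalPeriod_pos [Finite α] (i : α) : 0 < minimalPeriod σ i :=
  minimalPeriod_pos_of_mem_periodicPts (σ.injective.mem_periodicPts i)

theorem card_image_range_pow_apply [Finite α] [DecidableEq α] {m : ℕ} {i : α}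
    (hm : minimalPeriod σ i ≤ m) :
    ((Finset.range m).image fun k => (σ ^ k) i).card = minimalPeriod σ i := by
  have hrange : (Finset.range m).image (fun k => (σ ^ k) i) =
      (Finset.range (minimalPeriod σ i)).image fun k => (σ ^ k) i := by
    refine le_antisymm (fun j hj => ?_) (Finset.image_subset_image (Finset.range_mono hm))
    obtain ⟨k, -, rfl⟩ := Finset.mem_image.1 hj
    exact Finset.mem_image.2 ⟨k % minimalPeriod σ i,
      Finset.mem_range.2 (Nat.mod_lt _ (σ.minimalPeriod_pos i)), σ.pow_apply_mod_minimalPeriod k i⟩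
  rw [hrange, Finset.card_image_of_injOn (by simpa using σ.pow_apply_injOn_Iio_minimalPeriod i),
    Finset.card_range]

section CycleMins

variable [Fintype α] [LinearOrder α]

/-- The cycle representatives of `permCycleProd`. -/
noncomputable def cycleMins : Finset α := {i | ∀ k : ℕ, i ≤ (σ ^ k) i}

variable {σ}

theorem le_of_mem_cycleMins {i j : α} (hi : i ∈ σ.cycleMins) (hij : σ.SameCycle i j) : i ≤ j := by
  obtain ⟨k, rfl⟩ := hij.exists_nat_pow_eq
  exact (Finset.mem_filter.1 hi).2 k

theorem eq_of_mem_cycleMins_of_sameCycle {i j : α} (hi : i ∈ σ.cycleMins) (hj : j ∈ σ.cycleMins)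
    (hij : σ.SameCycle i j) : i = j :=
  le_antisymm (le_of_mem_cycleMins hi hij) (le_of_mem_cycleMins hj hij.symm)

variable (σ)

theorem exists_mem_cycleMins_sameCycle (j : α) : ∃ i ∈ σ.cycleMins, σ.SameCycle i j := by
  let S : Finset α := {y | σ.SameCycle j y}
  have hS : S.Nonempty := ⟨j, Finset.mem_filter.2 ⟨Finset.mem_univ _, .refl σ j⟩⟩
  have hji : σ.SameCycle j (S.min' hS) := (Finset.mem_filter.1 (S.min'_mem hS)).2
  refine ⟨S.min' hS, Finset.mem_filter.2 ⟨Finset.mem_univ _, fun k => ?_⟩, hji.symm⟩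
  exact S.min'_le _ (Finset.mem_filter.2 ⟨Finset.mem_univ _, sameCycle_pow_right.2 hji⟩)

theorem bijective_sigma_cycleMins_pow_apply :
    Bijective fun s : (Σ i : σ.cycleMins, Fin (minimalPeriod σ i)) => (σ ^ (s.2 : ℕ)) s.1 := by
  refine ⟨?_, fun j => ?_⟩
  · rintro ⟨⟨i, hi⟩, k⟩ ⟨⟨i', hi'⟩, k'⟩ h
    have h' : (σ ^ (k : ℕ)) i = (σ ^ (k' : ℕ)) i' := h
    have hsame : σ.SameCycle i i' := by
      rw [← sameCycle_pow_left (n := k), ← sameCycle_pow_right (n := k'), h']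
    obtain rfl : i = i' := eq_of_mem_cycleMins_of_sameCycle hi hi' hsame
    obtain rfl : k = k' := Fin.ext (σ.pow_apply_injOn_Iio_minimalPeriod i k.isLt k'.isLt h)
    rfl
  · obtain ⟨i, hi, hij⟩ := σ.exists_mem_cycleMins_sameCycle j
    obtain ⟨k, hk⟩ := hij.exists_nat_pow_eq
    exact ⟨⟨⟨i, hi⟩, ⟨k % minimalPeriod σ i, Nat.mod_lt _ (σ.minimalPeriod_pos i)⟩⟩,
      (σ.pow_apply_mod_minimalPeriod k i).trans hk⟩

noncomputable def cycleEquiv : (Σ i : σ.cycleMins, Fin (minimalPeriod σ i)) ≃ α :=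
  Equiv.ofBijective _ σ.bijective_sigma_cycleMins_pow_apply

theorem apply_cycleEquiv (s : Σ i : σ.cycleMins, Fin (minimalPeriod σ i)) :
    σ (σ.cycleEquiv s) =
      σ.cycleEquiv (sigmaCongrRight (fun i : σ.cycleMins => finRotate (minimalPeriod σ i)) s) := by
  obtain ⟨i, k⟩ := s
  change σ ((σ ^ (k : ℕ)) i) = (σ ^ (finRotate _ k : ℕ)) i
  rw [← Perm.mul_apply, ← pow_succ', val_finRotate, pow_apply_mod_minimalPeriod]

end CycleMins

end Equiv.Perm

section PermCycleProd

open Function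

variable {n : ℕ}

theorem permCycleProd_eq_prod_cycleMins {M A : Type*} [Monoid M] [CommMonoid A] (T : M → A)
    (x : Fin n → M) (σ : Equiv.Perm (Fin n)) :
    permCycleProd T x σ =
      ∏ i ∈ σ.cycleMins,
        T (List.ofFn fun k : Fin (minimalPeriod σ i) => x ((σ ^ (k : ℕ)) i)).prod := by
  rw [permCycleProd, Equiv.Perm.cycleMins, Finset.prod_filter]
  refine Finset.prod_congr rfl fun i _ => ?_
  rw [σ.card_image_range_pow_apply (minimalPeriod_le_card.trans_eq (Fintype.card_fin n)),
    List.ofFn_eq_map, ← List.map_coe_finRange_eq_range, List.map_map]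
  rfl

theorem permCycleProd_comp_monoidHom {M N A : Type*} [Monoid M] [Monoid N] [CommMonoid A]
    (T : N → A) (f : M →* N) (x : Fin n → M) (σ : Equiv.Perm (Fin n)) :
    permCycleProd (T ∘ f) x σ = permCycleProd T (f ∘ x) σ := by
  simp only [permCycleProd, comp_apply, map_list_prod, List.map_map, comp_def]

variable {ι R : Type*} [Fintype ι] [DecidableEq ι]

theorem permCycleProd_trace [CommSemiring R] (M : Fin n → Matrix ι ι R)
    (σ : Equiv.Perm (Fin n)) :
    permCycleProd Matrix.trace M σ = Matrix.permTrace σ M := by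
  rw [permCycleProd_eq_prod_cycleMins, Matrix.permTrace_of_semiconj σ.cycleEquiv σ.apply_cycleEquiv,
    Matrix.permTrace_sigmaCongrRight, ← Finset.prod_coe_sort]
  exact Finset.prod_congr rfl fun i _ =>
    (Matrix.permTrace_finRotate (σ.minimalPeriod_pos i).ne' _).symm

theorem sum_sign_mul_permCycleProd_trace_eq_zero [CommRing R] (M : Fin n → Matrix ι ι R)
    (h : Fintype.card ι < n) :
    ∑ σ : Equiv.Perm (Fin n), (Equiv.Perm.sign σ : R) * permCycleProd Matrix.trace M σ = 0 := by
  simp only [permCycleProd_trace]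
  exact Matrix.sum_sign_mul_permTrace_eq_zero M (by simpa using h)

end PermCycleProd

theorem frobenius_pseudocharacter_identity_general {A : Type} [CommRing A] (d : ℕ) :
    (∀ M : Fin (d + 1) → Matrix (Fin d) (Fin d) A,
      ∑ σ : Equiv.Perm (Fin (d + 1)),
        ((Equiv.Perm.sign σ : ℤ) : A) *
          permCycleProd (fun m : Matrix (Fin d) (Fin d) A => m.trace) M σ = 0) ∧
    (∀ (G : Type) [Group G] (ρ : G →* Matrix.GeneralLinearGroup (Fin d) A)
      (g : Fin (d + 1) → G),
      ∑ σ : Equiv.Perm (Fin (d + 1)),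
        ((Equiv.Perm.sign σ : ℤ) : A) *
          permCycleProd (fun h : G => ((ρ h : Matrix (Fin d) (Fin d) A)).trace) g σ = 0) := by
  have hcard : Fintype.card (Fin d) < d + 1 := by simp
  refine ⟨fun M => sum_sign_mul_permCycleProd_trace_eq_zero M hcard, fun G _ ρ g => ?_⟩
  have hmatrix := sum_sign_mul_permCycleProd_trace_eq_zero
    ((Units.coeHom (Matrix (Fin d) (Fin d) A)).comp ρ ∘ g) hcard
  simp only [← permCycleProd_comp_monoidHom] at hmatrix
  exact hmatrix

/-- **(Frobenius)** For any `d + 1` square matrices `M₁, …, M_{d+1}` of size `d` over a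
commutative ring `A`, one has `∑_{σ ∈ S_{d+1}} ε(σ) T^σ(M₁, …, M_{d+1}) = 0` where
`T^σ` is the product over the cycles of `σ` of the traces of the corresponding products.
In particular for a group homomorphism `ρ : G → GL_d(A)`, the function `T = tr ∘ ρ`
is a pseudocharacter of dimension `d`. -/
theorem frobenius_pseudocharacter_identity {A : Type} [CommRing A] (d : ℕ) (hd : 1 ≤ d) :
    (∀ M : Fin (d + 1) → Matrix (Fin d) (Fin d) A,
      ∑ σ : Equiv.Perm (Fin (d + 1)),
        ((Equiv.Perm.sign σ : ℤ) : A) *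
          permCycleProd (fun m : Matrix (Fin d) (Fin d) A => m.trace) M σ = 0) ∧
    (∀ (G : Type) [Group G] (ρ : G →* Matrix.GeneralLinearGroup (Fin d) A)
      (g : Fin (d + 1) → G),
      ∑ σ : Equiv.Perm (Fin (d + 1)),
        ((Equiv.Perm.sign σ : ℤ) : A) *
          permCycleProd (fun h : G => ((ρ h : Matrix (Fin d) (Fin d) A)).trace) g σ = 0) :=
  frobenius_pseudocharacter_identity_general d
end

section
/- Let k be a field, G a group, and let V₁, V₂ be finite-dimensional semisimple k-linear representations of G. Let ω: G → kˣ be a group homomorphism (a one-dimensional character) such that ω^n is a nontrivial character for every integer n with 1 ≤ n ≤ dim V₁ + dim V₂. If the representations V₁ ⊕ (ω ⊗ V₁) and V₂ ⊕ (ω ⊗ V₂) are isomorphic, then V₁ and V₂ are isomorphic. -/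
/-!
Write `D = dim V₁ + dim V₂` and, for an irreducible `τ`, let `dᵢ(n)` be the dimension of the space
of maps from `τ` to `ωⁿ ⊗ Vᵢ`. Twisting the given isomorphism by `ωⁿ` gives
`d₁(n) + d₁(n+1) = d₂(n) + d₂(n+1)`, so if `d₁(0) ≠ d₂(0)` then `d₁(n) ≠ d₂(n)` for every `n`:
all the twists `ω⁻ⁿ ⊗ τ` occur in `V₁ ⊕ V₂`. Pairwise non-isomorphic simple submodules lie in
independent isotypic components, so their dimensions add up to at most `D`. Hence there is a least
`p ≥ 1` with `τ ≅ ω⁻ᵖ ⊗ τ`, and `p · dim τ ≤ D`. Taking determinants in `τ ≅ ω⁻ᵖ ⊗ τ` gives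
`ω^(p · dim τ) = 1`, a contradiction. So `V₁` and `V₂` have the same multiplicities, and
semisimple modules are determined by their multiplicities.
-/

open Module
open scoped MonoidAlgebra

universe u

theorem LinearMap.pow_finrank_eq_one_of_comp_eq_smul_comp {k V : Type*} [CommRing k]
    [AddCommGroup V] [Module k V] [Module.Free k V] [Module.Finite k V] {f g : Module.End k V}
    (hf : IsUnit f.det) (hg : IsUnit g.det) {c : k} (h : f ∘ₗ g = c • (g ∘ₗ f)) :
    c ^ finrank k V = 1 := by
  have hdet := congrArg LinearMap.det h
  rw [LinearMap.det_comp, LinearMap.det_smul, LinearMap.det_comp, mul_comm g.det] at hdet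
  exact (hf.mul hg).mul_eq_right.mp hdet.symm

section SimpleModule

variable {k A M N S : Type*} [Field k] [Ring A] [Algebra k A]
  [AddCommGroup M] [Module A M] [Module k M] [IsScalarTower k A M]
  [AddCommGroup N] [Module A N] [Module k N] [IsScalarTower k A N]
  [AddCommGroup S] [Module A S]

instance Submodule.finiteDimensional_of_isScalarTower [FiniteDimensional k M]
    (Y : Submodule A M) : FiniteDimensional k Y :=
  inferInstanceAs (FiniteDimensional k (Y.restrictScalars k))

instance Module.Finite.linearMap_of_finite [Module.Finite A S] [Module.Finite k M] :
    Module.Finite k (S →ₗ[A] M) := by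
  obtain ⟨s, hs⟩ := Module.Finite.fg_top (R := A) (M := S)
  let ev : (S →ₗ[A] M) →ₗ[k] (s → M) :=
    { toFun f i := f i
      map_add' _ _ := rfl
      map_smul' _ _ := rfl }
  exact .of_injective ev fun f g hfg => LinearMap.ext_on hs fun x hx => congrFun hfg ⟨x, hx⟩

theorem finrank_linearMap_prod [Module.Finite A S] [Module.Finite k M] [Module.Finite k N] :
    finrank k (S →ₗ[A] M × N) = finrank k (S →ₗ[A] M) + finrank k (S →ₗ[A] N) := by
  rw [← (LinearMap.prodEquiv (S := k)).finrank_eq, Module.finrank_prod]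

theorem LinearEquiv.finrank_linearMap_eq (e : M ≃ₗ[A] N) :
    finrank k (S →ₗ[A] M) = finrank k (S →ₗ[A] N) :=
  LinearEquiv.finrank_eq
    { (LinearEquiv.refl A S).arrowCongrAddEquiv e with
      map_smul' c f := LinearMap.ext fun s => e.toLinearMap.map_smul_of_tower c (f s) }

omit [Module k M] [IsScalarTower k A M] in
theorem Submodule.subtype_ne_zero {Y : Submodule A M} [Nontrivial Y] : Y.subtype ≠ 0 := by
  obtain ⟨y, hy⟩ := exists_ne (0 : Y)
  exact fun h => hy (Subtype.ext (LinearMap.congr_fun h y))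

theorem IsSemisimpleModule.exists_finrank_linearMap_pos [IsSemisimpleModule A N]
    [FiniteDimensional k N] [Nontrivial N] :
    ∃ Y : Submodule A N, IsSimpleModule A Y ∧ 0 < finrank k (Y →ₗ[A] N) := by
  obtain ⟨Y, hY⟩ := IsSemisimpleModule.exists_simple_submodule A N
  have := IsSimpleModule.nontrivial A Y
  exact ⟨Y, hY, Module.finrank_pos_iff_exists_ne_zero.mpr ⟨Y.subtype, Y.subtype_ne_zero⟩⟩

theorem exists_linearEquiv_prod_of_ne_zero {X : Type*} [AddCommGroup X] [Module A X]
    [IsSimpleModule A X] [IsSemisimpleModule A N] {φ : X →ₗ[A] N} (hφ : φ ≠ 0) :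
    ∃ D : Submodule A N, Nonempty ((X × D) ≃ₗ[A] N) := by
  obtain ⟨D, hD⟩ := exists_isCompl (LinearMap.range φ)
  exact ⟨D, ⟨((LinearEquiv.ofInjective φ (φ.injective_or_eq_zero.resolve_right hφ)).prodCongr
    (.refl A D)).trans (Submodule.prodEquivOfIsCompl _ _ hD)⟩⟩

omit [Module k M] [IsScalarTower k A M] in
/-- Distinct simple submodules lie in distinct isotypic components, and those are independent. -/
theorem iSupIndep_of_pairwise_isEmpty_linearEquiv {ι : Type*} (X : ι → Submodule A M)
    [∀ i, IsSimpleModule A (X i)] (hX : Pairwise fun i j => IsEmpty (X i ≃ₗ[A] X j)) :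
    iSupIndep X := by
  let c (i : ι) : isotypicComponents A M :=
    ⟨isotypicComponent A M (X i), X i, inferInstance, rfl⟩
  have hc : Function.Injective c := fun i j hij => by
    by_contra hne
    have hle : X j ≤ isotypicComponent A M (X i) :=
      (X j).le_isotypicComponent.trans_eq (congrArg Subtype.val hij).symm
    obtain ⟨e⟩ := isIsotypicOfType_submodule_iff.mp
      (IsIsotypicOfType.isotypicComponent A M (X i)) _ hle
    exact (hX hne).false e.symm
  exact (((sSupIndep_iff _).mp (sSupIndep_isotypicComponents A M)).comp hc).mono
    fun i => (X i).le_isotypicComponent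

theorem iSupIndep.sum_finrank_le {ι : Type*} [Fintype ι] [FiniteDimensional k M]
    {X : ι → Submodule A M} (hX : iSupIndep X) : ∑ i, finrank k (X i) ≤ finrank k M := by
  classical
  let Y i := (X i).restrictScalars k
  let Φ : (Π₀ i, Y i) →ₗ[k] M := DFinsupp.lsum k fun i => (Y i).subtype
  have hΦ : Function.Injective Φ := hX.dfinsupp_lsum_injective
  exact (finrank_directSum k fun i => Y i).symm.trans_le
    (LinearMap.finrank_le_finrank_of_injective hΦ)

theorem sum_finrank_le_of_pairwise_isEmpty_linearEquiv {ι : Type*} [Fintype ι]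
    [FiniteDimensional k M] {S : ι → Type*} [∀ i, AddCommGroup (S i)] [∀ i, Module A (S i)]
    [∀ i, Module k (S i)] [∀ i, IsScalarTower k A (S i)] [∀ i, IsSimpleModule A (S i)]
    (hS : Pairwise fun i j => IsEmpty (S i ≃ₗ[A] S j)) (f : ∀ i, S i →ₗ[A] M)
    (hf : ∀ i, f i ≠ 0) : ∑ i, finrank k (S i) ≤ finrank k M := by
  let e i : S i ≃ₗ[A] LinearMap.range (f i) :=
    .ofInjective _ ((f i).injective_or_eq_zero.resolve_right (hf i))
  have (i : ι) : IsSimpleModule A (LinearMap.range (f i)) := .congr (e i).symm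
  have hX := iSupIndep_of_pairwise_isEmpty_linearEquiv (fun i => LinearMap.range (f i))
    fun i j hij => ⟨fun e' => (hS hij).false (((e i).trans e').trans (e j).symm)⟩
  simpa only [fun i => ((e i).restrictScalars k).finrank_eq] using hX.sum_finrank_le (k := k)

end SimpleModule

/-- Peel off a common simple summand `X` and induct on the dimension. -/
theorem IsSemisimpleModule.nonempty_linearEquiv_of_finrank_linearMap_eq {k A : Type*} [Field k]
    [Ring A] [Algebra k A] {M N : Type u} [AddCommGroup M] [Module A M] [Module k M]
    [IsScalarTower k A M] [AddCommGroup N] [Module A N] [Module k N] [IsScalarTower k A N]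
    [IsSemisimpleModule A M] [IsSemisimpleModule A N] [FiniteDimensional k M]
    [FiniteDimensional k N]
    (h : ∀ (S : Type u) [AddCommGroup S] [Module A S] [Module k S] [IsScalarTower k A S]
      [FiniteDimensional k S], IsSimpleModule A S →
        finrank k (S →ₗ[A] M) = finrank k (S →ₗ[A] N)) :
    Nonempty (M ≃ₗ[A] N) := by
  induction hn : finrank k M using Nat.strong_induction_on generalizing M N with
  | _ n ih =>
  rcases subsingleton_or_nontrivial M with hM | hM
  · suffices Subsingleton N from ⟨.ofSubsingleton M N⟩
    by_contra! hN
    obtain ⟨Y, hY, hpos⟩ := exists_finrank_linearMap_pos (k := k) (A := A) (N := N)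
    rw [← h Y hY, Module.finrank_zero_of_subsingleton] at hpos
    exact hpos.false
  obtain ⟨X, hX, hpos⟩ := exists_finrank_linearMap_pos (k := k) (A := A) (N := M)
  obtain ⟨ψ, hψ⟩ := Module.finrank_pos_iff_exists_ne_zero.mp hpos
  obtain ⟨φ, hφ⟩ := Module.finrank_pos_iff_exists_ne_zero.mp (h X hX ▸ hpos)
  obtain ⟨C, ⟨eM⟩⟩ := exists_linearEquiv_prod_of_ne_zero hψ
  obtain ⟨D, ⟨eN⟩⟩ := exists_linearEquiv_prod_of_ne_zero hφ
  have hCD (S : Type u) [AddCommGroup S] [Module A S] [Module k S] [IsScalarTower k A S]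
      [FiniteDimensional k S] (hS : IsSimpleModule A S) :
      finrank k (S →ₗ[A] C) = finrank k (S →ₗ[A] D) := by
    have := h S hS
    rw [← eM.finrank_linearMap_eq, ← eN.finrank_linearMap_eq, finrank_linearMap_prod,
      finrank_linearMap_prod] at this
    omega
  have hlt : finrank k C < n := by
    have := IsSimpleModule.nontrivial A X
    have := Module.finrank_pos (R := k) (M := X)
    rw [← hn, ← (eM.restrictScalars k).finrank_eq, Module.finrank_prod]
    omega
  obtain ⟨eCD⟩ := ih _ hlt hCD rfl
  exact ⟨eM.symm.trans (((LinearEquiv.refl A X).prodCongr eCD).trans eN)⟩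

namespace Representation

section CommSemiring

variable {k G V W : Type*} [CommSemiring k] [Monoid G] [AddCommMonoid V] [Module k V]
  [AddCommMonoid W] [Module k W] (ρ : Representation k G V) (σ : Representation k G W)

/-- `χ ⊗ ρ`, realised on the space of `ρ`. -/
def twist (χ : G →* kˣ) : Representation k G V where
  toFun g := (χ g : k) • ρ g
  map_one' := by simp
  map_mul' g h := by simp [smul_smul, Module.End.mul_eq_comp, mul_comm]

@[simp]
theorem twist_apply (χ : G →* kˣ) (g : G) : ρ.twist χ g = (χ g : k) • ρ g := rfl

@[simp]
theorem twist_one : ρ.twist 1 = ρ := by ext; simp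

@[simp]
theorem twist_twist (χ ψ : G →* kˣ) : (ρ.twist χ).twist ψ = ρ.twist (ψ * χ) := by
  ext; simp [smul_smul]

theorem prod_twist (χ : G →* kˣ) : (ρ.prod σ).twist χ = (ρ.twist χ).prod (σ.twist χ) := by
  ext <;> simp

variable {ρ σ}

def IntertwiningMap.twistLinearEquiv (χ : G →* kˣ) :
    IntertwiningMap ρ σ ≃ₗ[k] IntertwiningMap (ρ.twist χ) (σ.twist χ) where
  toFun f := ⟨f.toLinearMap, fun g => by
    rw [twist_apply, twist_apply, LinearMap.comp_smul, LinearMap.smul_comp, f.isIntertwining']⟩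
  invFun f := ⟨f.toLinearMap, fun g => by
    have := f.isIntertwining' g
    rw [twist_apply, twist_apply, LinearMap.comp_smul, LinearMap.smul_comp] at this
    exact (χ g).isUnit.smul_left_cancel.mp this⟩
  map_add' _ _ := rfl
  map_smul' _ _ := rfl
  left_inv _ := rfl
  right_inv _ := rfl

def Equiv.twist (e : ρ.Equiv σ) (χ : G →* kˣ) : (ρ.twist χ).Equiv (σ.twist χ) :=
  .mk e.toLinearEquiv fun g => by
    rw [twist_apply, twist_apply, LinearMap.comp_smul, LinearMap.smul_comp, e.isIntertwining']

def subrepresentationTwistOrderIso (χ : G →* kˣ) :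
    Subrepresentation (ρ.twist χ) ≃o Subrepresentation ρ where
  toFun W := ⟨W.toSubmodule, fun g v hv => by
    simpa [Units.smul_def] using
      (Submodule.smul_mem_iff' _ (χ g)).mp (W.apply_mem_toSubmodule g hv)⟩
  invFun W := ⟨W.toSubmodule, fun g v hv => by
    simpa [Units.smul_def] using
      (Submodule.smul_mem_iff' _ (χ g)).mpr (W.apply_mem_toSubmodule g hv)⟩
  left_inv _ := rfl
  right_inv _ := rfl
  map_rel_iff' := Iff.rfl

noncomputable def Equiv.ofAsModule (e : ρ.asModule ≃ₗ[k[G]] σ.asModule) : ρ.Equiv σ :=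
  IntertwiningMap.ofBijective ((IntertwiningMap.equivLinearMapAsModule ρ σ).symm e.toLinearMap)
    e.bijective

theorem ofModule'_asAlgebraHom_apply (S : Type*) [AddCommMonoid S] [Module k S] [Module k[G] S]
    [IsScalarTower k k[G] S] (r : k[G]) (x : S) : (ofModule' S).asAlgebraHom r x = r • x := by
  induction r using MonoidAlgebra.induction_linear with
  | zero => simp
  | add a b ha hb => simp [add_smul, ha, hb]
  | single g c =>
    rw [asAlgebraHom_single, LinearMap.smul_apply, ← mul_one c, ← MonoidAlgebra.smul_single',
      smul_assoc, mul_one]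
    rfl

noncomputable def ofModule'AsModuleEquiv (S : Type*) [AddCommMonoid S] [Module k S]
    [Module k[G] S] [IsScalarTower k k[G] S] :
    (ofModule' (k := k) (G := G) S).asModule ≃ₗ[k[G]] S where
  toFun x := x
  invFun x := x
  map_add' _ _ := rfl
  map_smul' r x := ofModule'_asAlgebraHom_apply S r x
  left_inv _ := rfl
  right_inv _ := rfl

end CommSemiring

variable {k G V W U : Type*} [Field k] [AddCommGroup V] [Module k V] [AddCommGroup W]
  [Module k W] [AddCommGroup U] [Module k U]

section Monoid

variable [Monoid G] {ρ : Representation k G V} {σ : Representation k G W}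
  {τ : Representation k G U}

instance isIrreducible_twist [τ.IsIrreducible] (χ : G →* kˣ) : (τ.twist χ).IsIrreducible :=
  (subrepresentationTwistOrderIso (ρ := τ) χ).isSimpleOrder

theorem finrank_intertwiningMap_twist (χ : G →* kˣ) :
    finrank k (IntertwiningMap (ρ.twist χ) (σ.twist χ)) = finrank k (IntertwiningMap ρ σ) :=
  (IntertwiningMap.twistLinearEquiv χ).finrank_eq.symm

theorem finrank_intertwiningMap_prod [FiniteDimensional k U] [FiniteDimensional k V]
    [FiniteDimensional k W] :
    finrank k (IntertwiningMap τ (ρ.prod σ)) =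
      finrank k (IntertwiningMap τ ρ) + finrank k (IntertwiningMap τ σ) := by
  let e : (IntertwiningMap τ ρ × IntertwiningMap τ σ) ≃ₗ[k] IntertwiningMap τ (ρ.prod σ) :=
    { toFun fg := fg.1.prod fg.2
      invFun h := ((IntertwiningMap.fst k ρ σ).comp h, (IntertwiningMap.snd k ρ σ).comp h)
      map_add' _ _ := rfl
      map_smul' _ _ := rfl
      left_inv _ := by simp
      right_inv _ := rfl }
  rw [← e.finrank_eq, Module.finrank_prod]

theorem Equiv.finrank_intertwiningMap_eq (e : ρ.Equiv σ) :
    finrank k (IntertwiningMap τ ρ) = finrank k (IntertwiningMap τ σ) :=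
  LinearEquiv.finrank_eq <| .ofLinearMap (IntertwiningMap.llcomp τ ρ σ e.toIntertwiningMap)
    (IntertwiningMap.llcomp τ σ ρ e.symm.toIntertwiningMap)
    (by ext; simp [← IntertwiningMap.comp_def]) (by ext; simp [← IntertwiningMap.comp_def])

theorem nonempty_equiv_of_finrank_intertwiningMap_eq {V W : Type u} [AddCommGroup V]
    [Module k V] [AddCommGroup W] [Module k W] [FiniteDimensional k V] [FiniteDimensional k W]
    (ρ : Representation k G V) (σ : Representation k G W)
    [IsSemisimpleModule k[G] ρ.asModule] [IsSemisimpleModule k[G] σ.asModule]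
    (h : ∀ (U : Type u) [AddCommGroup U] [Module k U] [FiniteDimensional k U]
      (τ : Representation k G U), τ.IsIrreducible →
        finrank k (IntertwiningMap τ ρ) = finrank k (IntertwiningMap τ σ)) :
    Nonempty (ρ.Equiv σ) := by
  refine (IsSemisimpleModule.nonempty_linearEquiv_of_finrank_linearMap_eq (k := k)
    fun S _ _ _ _ _ hS => ?_).map Equiv.ofAsModule
  let eS := ofModule'AsModuleEquiv (k := k) (G := G) S
  have hτ : (ofModule' (k := k) (G := G) S).IsIrreducible :=
    (irreducible_iff_isSimpleModule_asModule _).mpr (.congr eS)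
  have key {X : Type u} [AddCommGroup X] [Module k X] (π : Representation k G X) :
      finrank k (S →ₗ[k[G]] π.asModule) = finrank k (IntertwiningMap (ofModule' S) π) :=
    ((IntertwiningMap.equivLinearMapAsModule _ π).trans
      (LinearEquiv.congrLeft _ k eS)).finrank_eq.symm
  rw [key, key]
  exact h S _ hτ

end Monoid

section Group

variable [Group G] {ρ : Representation k G V} {σ : Representation k G W}
  {τ : Representation k G U}

theorem pow_finrank_eq_one_of_equiv_twist [FiniteDimensional k U] {χ : G →* kˣ}
    (e : τ.Equiv (τ.twist χ)) (g : G) : χ g ^ finrank k U = 1 := by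
  have hτ : IsUnit (τ g).det := (τ.asGroupHom g).isUnit.map LinearMap.det
  have := LinearMap.pow_finrank_eq_one_of_comp_eq_smul_comp e.toLinearEquiv.isUnit_det' hτ
    (e.isIntertwining' g)
  exact Units.ext (by simpa using this)

theorem Equiv.nonempty_twist_pow_sub {χ : G →* kˣ} {i j : ℕ} (hij : i ≤ j)
    (e : (τ.twist (χ ^ i)).Equiv (τ.twist (χ ^ j))) :
    Nonempty (τ.Equiv (τ.twist (χ ^ (j - i)))) := by
  have e' := e.twist (χ ^ i)⁻¹
  -- The group laws of `G →* kˣ` do not match syntactically under `rw`; check them pointwise.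
  rw [twist_twist, twist_twist, show (χ ^ i)⁻¹ * χ ^ i = 1 by ext; simp, twist_one,
    show (χ ^ i)⁻¹ * χ ^ j = χ ^ (j - i) by ext; simp [pow_sub _ hij, mul_comm]] at e'
  exact ⟨e'⟩

theorem card_mul_finrank_le_of_pairwise_isEmpty_equiv [FiniteDimensional k U]
    [FiniteDimensional k V] {ι : Type*} [Fintype ι] (τ : ι → Representation k G U)
    [∀ i, (τ i).IsIrreducible] (hτ : Pairwise fun i j => IsEmpty ((τ i).Equiv (τ j)))
    (σ : Representation k G V) (hσ : ∀ i, 0 < finrank k (IntertwiningMap (τ i) σ)) :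
    Fintype.card ι * finrank k U ≤ finrank k V := by
  choose f hf using fun i => Module.finrank_pos_iff_exists_ne_zero.mp (hσ i)
  have := sum_finrank_le_of_pairwise_isEmpty_linearEquiv (k := k) (S := fun i => (τ i).asModule)
    (fun i j hij => ⟨fun e => (hτ hij).false (.ofAsModule e)⟩)
    (fun i => IntertwiningMap.equivLinearMapAsModule _ _ (f i)) (fun i => by simpa using hf i)
  simp only [show ∀ i, finrank k (τ i).asModule = finrank k U from fun _ => rfl,
    Finset.sum_const, Finset.card_univ, smul_eq_mul] at this
  exact this

theorem exists_equiv_twist_pow [FiniteDimensional k U] [FiniteDimensional k V]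
    (τ : Representation k G U) [τ.IsIrreducible] (σ : Representation k G V) (χ : G →* kˣ)
    (h : ∀ n : ℕ, 0 < finrank k (IntertwiningMap (τ.twist (χ ^ n)) σ)) :
    ∃ p, 0 < p ∧ p * finrank k U ≤ finrank k V ∧ Nonempty (τ.Equiv (τ.twist (χ ^ p))) := by
  have bound (m : ℕ) (hm : ∀ p, 0 < p → p < m → IsEmpty (τ.Equiv (τ.twist (χ ^ p)))) :
      m * finrank k U ≤ finrank k V := by
    refine (Fintype.card_fin m ▸ card_mul_finrank_le_of_pairwise_isEmpty_equiv
      (fun i : Fin m => τ.twist (χ ^ (i : ℕ))) ?_ σ fun i => h i)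
    intro i j hij
    refine ⟨fun e => ?_⟩
    rcases lt_or_gt_of_ne (Fin.val_ne_of_ne hij) with hlt | hlt
    · obtain ⟨e'⟩ := e.nonempty_twist_pow_sub hlt.le
      exact (hm _ (by omega) (by omega)).false e'
    · obtain ⟨e'⟩ := e.symm.nonempty_twist_pow_sub hlt.le
      exact (hm _ (by omega) (by omega)).false e'
  have := IsSimpleModule.nontrivial k[G] τ.asModule
  have hU : 0 < finrank k U := Module.finrank_pos (R := k) (M := τ.asModule)
  have hex : ∃ p, 0 < p ∧ Nonempty (τ.Equiv (τ.twist (χ ^ p))) := by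
    by_contra! hno
    have := bound (finrank k V + 1) fun p hp _ => hno p hp
    nlinarith
  classical
  refine ⟨Nat.find hex, (Nat.find_spec hex).1, bound _ fun q hq hqp => ?_, (Nat.find_spec hex).2⟩
  exact not_nonempty_iff.mp fun hne => Nat.find_min hex hqp ⟨hq, hne⟩

theorem finrank_intertwiningMap_twist_pow_ne [FiniteDimensional k U] [FiniteDimensional k V]
    [FiniteDimensional k W] {χ : G →* kˣ} (e : (ρ.prod (ρ.twist χ)).Equiv (σ.prod (σ.twist χ)))
    (hne : finrank k (IntertwiningMap τ ρ) ≠ finrank k (IntertwiningMap τ σ)) (n : ℕ) :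
    finrank k (IntertwiningMap τ (ρ.twist (χ ^ n))) ≠
      finrank k (IntertwiningMap τ (σ.twist (χ ^ n))) := by
  induction n with
  | zero => rwa [show χ ^ 0 = 1 by ext; simp, twist_one, twist_one]
  | succ n ih =>
    have := (e.twist (χ ^ n)).finrank_intertwiningMap_eq (τ := τ)
    rw [prod_twist, prod_twist, finrank_intertwiningMap_prod, finrank_intertwiningMap_prod,
      twist_twist, twist_twist, show χ ^ n * χ = χ ^ (n + 1) by ext; simp [pow_succ]] at this
    omega

theorem finrank_intertwiningMap_eq_of_equiv_prod_twist [FiniteDimensional k U]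
    [FiniteDimensional k V] [FiniteDimensional k W] [τ.IsIrreducible] {χ : G →* kˣ}
    (hχ : ∀ n : ℕ, 1 ≤ n → n ≤ finrank k V + finrank k W → ∃ g : G, χ g ^ n ≠ 1)
    (e : (ρ.prod (ρ.twist χ)).Equiv (σ.prod (σ.twist χ))) :
    finrank k (IntertwiningMap τ ρ) = finrank k (IntertwiningMap τ σ) := by
  by_contra hne
  have hocc (n : ℕ) : 0 < finrank k (IntertwiningMap (τ.twist (χ⁻¹ ^ n)) (ρ.prod σ)) := by
    rw [← finrank_intertwiningMap_twist (χ ^ n), twist_twist,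
      show χ ^ n * χ⁻¹ ^ n = 1 by ext; simp, twist_one, prod_twist, finrank_intertwiningMap_prod]
    have := finrank_intertwiningMap_twist_pow_ne e hne n
    omega
  obtain ⟨p, hp, hpU, ⟨e'⟩⟩ := exists_equiv_twist_pow τ (ρ.prod σ) χ⁻¹ hocc
  have := IsSimpleModule.nontrivial k[G] τ.asModule
  have hU : 0 < finrank k U := Module.finrank_pos (R := k) (M := τ.asModule)
  obtain ⟨g, hg⟩ := hχ (p * finrank k U) (Nat.mul_pos hp hU) (by simpa using hpU)
  apply hg
  have := pow_finrank_eq_one_of_equiv_twist e' g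
  simpa [inv_pow, ← pow_mul] using this

end Group

end Representation

/-- **(Cancellation lemma, Chenevier–Lannes)** Let `V₁, V₂` be finite-dimensional
semisimple representations of a group `G` over a field `k`, and let `ω : G → kˣ` be a
character with `ω^n` nontrivial for `1 ≤ n ≤ dim V₁ + dim V₂`.  If
`V₁ ⊕ (ω ⊗ V₁) ≅ V₂ ⊕ (ω ⊗ V₂)` then `V₁ ≅ V₂`. -/
theorem semisimple_rep_cancellation
    (k G W₁ W₂ : Type) [Field k] [Group G]
    [AddCommGroup W₁] [Module k W₁] [FiniteDimensional k W₁]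
    [AddCommGroup W₂] [Module k W₂] [FiniteDimensional k W₂]
    (ρ₁ : Representation k G W₁) (ρ₂ : Representation k G W₂)
    (hss₁ : IsSemisimpleModule (MonoidAlgebra k G) ρ₁.asModule)
    (hss₂ : IsSemisimpleModule (MonoidAlgebra k G) ρ₂.asModule)
    (ω : G →* kˣ)
    (hω : ∀ n : ℕ, 1 ≤ n → n ≤ Module.finrank k W₁ + Module.finrank k W₂ →
      ∃ g : G, (ω g) ^ n ≠ 1)
    (hiso : ∃ e : (W₁ × W₁) ≃ₗ[k] (W₂ × W₂),
      ∀ (g : G) (x y : W₁),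
        e (ρ₁ g x, (ω g : k) • ρ₁ g y) =
          (ρ₂ g (e (x, y)).1, (ω g : k) • ρ₂ g (e (x, y)).2)) :
    ∃ e : W₁ ≃ₗ[k] W₂, ∀ (g : G) (x : W₁), e (ρ₁ g x) = ρ₂ g (e x) := by
  obtain ⟨e, he⟩ := hiso
  let E : (ρ₁.prod (ρ₁.twist ω)).Equiv (ρ₂.prod (ρ₂.twist ω)) :=
    .mk e fun g => LinearMap.ext fun ⟨x, y⟩ => he g x y
  obtain ⟨F⟩ := Representation.nonempty_equiv_of_finrank_intertwiningMap_eq ρ₁ ρ₂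
    fun U _ _ _ τ _ => Representation.finrank_intertwiningMap_eq_of_equiv_prod_twist hω E
  exact ⟨F.toLinearEquiv, F.isIntertwining⟩
end

section
/- Let p be an odd prime, let V be a finite-dimensional 𝔽_p-vector space of dimension > 1, and let u ∈ GL(V) be an element of odd finite order m having no nonzero fixed vector (i.e. 1 is not an eigenvalue of u). Let G = V ⋊ ℤ/mℤ be the semidirect product in which the generator 1 of ℤ/mℤ acts on V by u. Let χ: V → ℂˣ be a nontrivial character and let W be a finite-dimensional irreducible complex representation of G whose restriction to V contains χ (i.e. there is a nonzero w ∈ W with v·w = χ(v)·w for all v ∈ V). Then for every group homomorphism η: G → ℂˣ, the dual representation W^* is not isomorphic to η ⊗ W. -/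
/-!
`η` is trivial on `V`, since `u - 1` is invertible on `V` and so every element of `V` is a
commutator. Averaging over `V` produces a `χ⁻¹`-eigenvector in `W^*`, so an isomorphism
`W^* ≅ η ⊗ W` yields a `χ⁻¹`-eigenvector in `W`. By irreducibility `W` is spanned by the
translates `ρ(t) w`, which are eigenvectors for the characters `χ ∘ φ(t)⁻¹`, so
`χ⁻¹ = χ ∘ α` for some `α = φ(t)⁻¹` with `α ^ m = 1`. As `m` is odd, iterating gives
`χ = χ⁻¹`; as `χ ^ p = 1` with `p` odd, `χ = 1`.
-/

open SemidirectProduct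

namespace Representation

variable {k A W : Type*} [Field k] [Group A] [Fintype A] [AddCommGroup W] [Module k W]
  (σ : Representation k A W)

/-- `|A|` times the projection onto the `χ`-eigenspace of `σ`. -/
noncomputable def charAverage (χ : A →* kˣ) : W →ₗ[k] W :=
  ∑ a, ((χ a : k))⁻¹ • σ a

variable {σ}

theorem charAverage_apply_of_eigen (χ : A →* kˣ) {ψ : A →* kˣ} {x : W}
    (hx : ∀ a, σ a x = (ψ a : k) • x) :
    σ.charAverage χ x = (∑ a, ((χ⁻¹ * ψ) a : k)) • x := by
  simp only [charAverage, LinearMap.sum_apply, LinearMap.smul_apply, hx, smul_smul,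
    Finset.sum_smul, MonoidHom.mul_apply, MonoidHom.inv_apply, Units.val_mul,
    Units.val_inv_eq_inv_val]

theorem charAverage_apply_self {χ : A →* kˣ} {x : W} (hx : ∀ a, σ a x = (χ a : k) • x) :
    σ.charAverage χ x = (Fintype.card A : k) • x := by
  simp [charAverage_apply_of_eigen χ hx]

theorem charAverage_apply_eq_zero {χ ψ : A →* kˣ} (hψ : ψ ≠ χ) {x : W}
    (hx : ∀ a, σ a x = (ψ a : k) • x) : σ.charAverage χ x = 0 := by
  have hne : (Units.coeHom k).comp (χ⁻¹ * ψ) ≠ 1 := fun h ↦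
    hψ (inv_mul_eq_one.mp (MonoidHom.ext fun a ↦ Units.ext (DFunLike.congr_fun h a))).symm
  rw [charAverage_apply_of_eigen χ hx]
  exact (sum_hom_units_eq_zero _ hne).symm ▸ zero_smul k x

theorem charAverage_comp (χ : A →* kˣ) (b : A) :
    σ.charAverage χ ∘ₗ σ b = (χ b : k) • σ.charAverage χ := by
  ext x
  simp only [charAverage, LinearMap.comp_apply, LinearMap.smul_apply, LinearMap.sum_apply,
    Finset.smul_sum, smul_smul, ← Module.End.mul_apply, ← map_mul]
  refine Fintype.sum_equiv (Equiv.mulRight b) _ _ fun a ↦ ?_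
  simp [mul_comm]

theorem exists_dual_eigenvector (hA : (Fintype.card A : k) ≠ 0) {χ : A →* kˣ} {w : W}
    (hw0 : w ≠ 0) (hw : ∀ a, σ a w = (χ a : k) • w) :
    ∃ f : Module.Dual k W, f ≠ 0 ∧ ∀ a, σ.dual a f = ((χ⁻¹ a : kˣ) : k) • f := by
  obtain ⟨f₀, hf₀⟩ := Module.Projective.exists_dual_ne_zero k hw0
  refine ⟨f₀ ∘ₗ σ.charAverage χ, fun h ↦ ?_, fun a ↦ ?_⟩
  · have := LinearMap.congr_fun h w
    simp [charAverage_apply_self hw, hA, hf₀] at this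
  · rw [dual_apply, Module.Dual.transpose_apply, LinearMap.comp_assoc, charAverage_comp,
      LinearMap.comp_smul]
    simp

theorem exists_eq_of_span_eigenvectors_eq_top (hA : (Fintype.card A : k) ≠ 0)
    {ι : Type*} {y : ι → W} {ψ : ι → A →* kˣ} (hy : ∀ i a, σ a (y i) = (ψ i a : k) • y i)
    (hspan : Submodule.span k (Set.range y) = ⊤) {χ : A →* kˣ} {x : W} (hx0 : x ≠ 0)
    (hx : ∀ a, σ a x = (χ a : k) • x) : ∃ i, ψ i = χ := by
  by_contra! hψ
  have hker : Submodule.span k (Set.range y) ≤ LinearMap.ker (σ.charAverage χ) :=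
    Submodule.span_le.mpr <| Set.range_subset_iff.mpr fun i ↦
      charAverage_apply_eq_zero (hψ i) (hy i)
  have hxker := hker (hspan ▸ Submodule.mem_top : x ∈ _)
  rw [LinearMap.mem_ker, charAverage_apply_self hx, smul_eq_zero] at hxker
  exact hxker.elim hA hx0

end Representation

namespace SemidirectProduct

variable {N H : Type*} [Group N] [Group H] {φ : H →* MulAut N}

theorem map_inl_aut_mul_inv {M : Type*} [CommGroup M] (η : N ⋊[φ] H →* M) (h : H) (n : N) :
    η (inl (φ h n * n⁻¹)) = 1 := by
  simp only [inl_aut, map_mul, map_inv]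
  exact mul_inv_eq_one.mpr (by simp)

variable {k W : Type*} [Field k] [AddCommGroup W] [Module k W]
  {ρ : Representation k (N ⋊[φ] H) W} {χ : N →* kˣ} {w : W}

theorem rep_inl_rep_inr_eq_smul (hw : ∀ n, ρ (inl n) w = (χ n : k) • w) (n : N) (h : H) :
    ρ (inl n) (ρ (inr h) w) = (χ (φ h⁻¹ n) : k) • ρ (inr h) w := by
  have hconj : (inl n : N ⋊[φ] H) * inr h = inr h * inl (φ h⁻¹ n) := by
    rw [map_inv, inl_aut_inv, ← mul_assoc, ← mul_assoc, ← map_mul, mul_inv_cancel, map_one,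
      one_mul]
  rw [← Module.End.mul_apply, ← map_mul, hconj, map_mul, Module.End.mul_apply, hw, map_smul]

theorem rep_mem_span_orbit_inr (hw : ∀ n, ρ (inl n) w = (χ n : k) • w) (g : N ⋊[φ] H) {x : W}
    (hx : x ∈ Submodule.span k (Set.range fun h ↦ ρ (inr h) w)) :
    ρ g x ∈ Submodule.span k (Set.range fun h ↦ ρ (inr h) w) := by
  induction hx using Submodule.span_induction with
  | mem _ hy =>
    obtain ⟨h, rfl⟩ := hy
    dsimp only
    rw [← inl_left_mul_inr_right g, map_mul, Module.End.mul_apply,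
      ← Module.End.mul_apply (ρ (inr _)), ← map_mul, ← map_mul, rep_inl_rep_inr_eq_smul hw]
    exact Submodule.smul_mem _ _ (Submodule.subset_span ⟨_, rfl⟩)
  | zero => simp
  | add _ _ _ _ hx hy => simpa using Submodule.add_mem _ hx hy
  | smul c _ _ hx => simpa using Submodule.smul_mem _ c hx

end SemidirectProduct

theorem MonoidHom.apply_sq_eq_one_of_apply_aut_eq_inv {N M : Type*} [Group N] [CommGroup M]
    (χ : N →* M) {α : MulAut N} {m : ℕ} (hm : Odd m) (hα : α ^ m = 1)
    (h : ∀ n, χ (α n) = (χ n)⁻¹) (n : N) : χ n ^ 2 = 1 := by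
  have heven : ∀ j n, χ ((α ^ (2 * j)) n) = χ n := by
    intro j
    induction j with
    | zero => simp
    | succ j ih => intro n; simp [mul_add, pow_add, ih, sq, h]
  obtain ⟨j, rfl⟩ := hm
  have := heven j (α n)
  rw [← MulAut.mul_apply, ← pow_succ, hα, MulAut.one_apply, h] at this
  rwa [eq_inv_iff_mul_eq_one, ← sq] at this

theorem ZModModule.pow_char_eq_one {n : ℕ} {G : Type*} [AddCommGroup G] [Module (ZMod n) G]
    (x : Multiplicative G) : x ^ n = 1 := by
  rw [← ofAdd_toAdd x, ← ofAdd_nsmul, ZModModule.char_nsmul_eq_zero, ofAdd_zero]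

theorem Module.End.surjective_sub_one_of_fixed_eq_zero {K V : Type*} [DivisionRing K]
    [AddCommGroup V] [Module K V] [FiniteDimensional K V] {f : Module.End K V}
    (hf : ∀ v, f v = v → v = 0) : Function.Surjective ⇑(f - 1) :=
  LinearMap.injective_iff_surjective.mp <|
    (injective_iff_map_eq_zero (f - 1)).mpr fun v hv ↦ hf v (sub_eq_zero.mp hv)

theorem dual_not_twist_of_semidirect_product_rep_general
    (p : ℕ) [Fact p.Prime] (hodd : Odd p)
    (V : Type) [AddCommGroup V] [Module (ZMod p) V] [FiniteDimensional (ZMod p) V]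
    (u : V ≃ₗ[ZMod p] V) (m : ℕ) (hm : Odd m)
    (hfix : ∀ v : V, u v = v → v = 0)
    (φ : Multiplicative (ZMod m) →* MulAut (Multiplicative V))
    (hφ : ∀ v : V,
      φ (Multiplicative.ofAdd (1 : ZMod m)) (Multiplicative.ofAdd v) =
        Multiplicative.ofAdd (u v))
    (χ : Multiplicative V →* ℂˣ) (hχ : χ ≠ 1)
    (W : Type) [AddCommGroup W] [Module ℂ W]
    (ρ : Representation ℂ (Multiplicative V ⋊[φ] Multiplicative (ZMod m)) W)
    (hirr : ∀ U : Submodule ℂ W,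
      (∀ g : Multiplicative V ⋊[φ] Multiplicative (ZMod m), ∀ x ∈ U, ρ g x ∈ U) →
      U = ⊥ ∨ U = ⊤)
    (hw : ∃ w : W, w ≠ 0 ∧ ∀ v : V,
      ρ (SemidirectProduct.inl (Multiplicative.ofAdd v)) w =
        (χ (Multiplicative.ofAdd v) : ℂ) • w) :
    ∀ η : (Multiplicative V ⋊[φ] Multiplicative (ZMod m)) →* ℂˣ,
      ¬ ∃ e : Module.Dual ℂ W ≃ₗ[ℂ] W,
        ∀ (g : Multiplicative V ⋊[φ] Multiplicative (ZMod m)) (f : Module.Dual ℂ W),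
          e (ρ.dual g f) = (η g : ℂ) • ρ g (e f) := by
  rintro η ⟨e, he⟩
  obtain ⟨w, hw0, hw⟩ := hw
  replace hw : ∀ n, ρ (inl n) w = (χ n : ℂ) • w := fun n ↦ hw n.toAdd
  have : Finite V := Module.finite_of_finite (ZMod p)
  have : Fintype V := Fintype.ofFinite V
  have hcard : (Fintype.card (Multiplicative V) : ℂ) ≠ 0 :=
    Nat.cast_ne_zero.mpr Fintype.card_ne_zero
  set σ : Representation ℂ (Multiplicative V) W := ρ.comp inl
  have hη : ∀ n, η (inl n) = 1 := fun n ↦ by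
    obtain ⟨x, hx⟩ :=
      Module.End.surjective_sub_one_of_fixed_eq_zero (f := u.toLinearMap) hfix n.toAdd
    have : n = φ (.ofAdd 1) (.ofAdd x) * (.ofAdd x)⁻¹ := by
      rw [hφ, ← ofAdd_neg, ← ofAdd_add, ← sub_eq_add_neg, ← ofAdd_toAdd n, ← hx]; rfl
    rw [this, map_inl_aut_mul_inv]
  obtain ⟨f, hf0, hf⟩ := σ.exists_dual_eigenvector hcard hw0 hw
  have hef : ∀ n, σ n (e f) = ((χ⁻¹ n : ℂˣ) : ℂ) • e f := fun n ↦ by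
    have h := he (inl n) f
    rw [hη, Units.val_one, one_smul] at h
    calc σ n (e f) = e (ρ.dual (inl n) f) := h.symm
      _ = e (σ.dual n f) := by simp [σ, Representation.dual_apply]
      _ = _ := by rw [hf, map_smul]
  have hspan : Submodule.span ℂ (Set.range fun t ↦ ρ (inr t) w) = ⊤ := by
    refine (hirr _ fun g _ ↦ rep_mem_span_orbit_inr hw g).resolve_left fun h ↦ hw0 ?_
    simpa [h] using Submodule.subset_span (R := ℂ) (Set.mem_range_self (f := fun t ↦ ρ (inr t) w) 1)
  obtain ⟨t, ht⟩ := σ.exists_eq_of_span_eigenvectors_eq_top hcard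
    (ψ := fun t ↦ χ.comp (φ t⁻¹).toMonoidHom) (fun t n ↦ rep_inl_rep_inr_eq_smul hw n t)
    hspan (e.map_ne_zero_iff.mpr hf0) hef
  refine hχ (MonoidHom.ext fun n ↦ ?_)
  have hsq : χ n ^ 2 = 1 := χ.apply_sq_eq_one_of_apply_aut_eq_inv hm
    (by rw [← map_pow, ZModModule.pow_char_eq_one, map_one]) (fun n ↦ DFunLike.congr_fun ht n) n
  have hp : χ n ^ p = 1 := by rw [← map_pow, ZModModule.pow_char_eq_one, map_one]
  simpa [Nat.Coprime.gcd_eq_one (Nat.coprime_two_left.mpr hodd)] using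
    pow_gcd_eq_one.mpr ⟨hsq, hp⟩

/-- **(Chenevier–Clozel)** Let `p` be an odd prime, `V` a finite-dimensional
`𝔽_p`-vector space of dimension `> 1`, and `u ∈ GL(V)` of odd finite order `m` with no
nonzero fixed vector.  Let `G = V ⋊ ℤ/mℤ` be the semidirect product where the generator
`1` of `ℤ/mℤ` acts by `u`.  Let `χ : V → ℂˣ` be a nontrivial character and `W` a
finite-dimensional irreducible complex representation of `G` whose restriction to `V`
contains `χ`.  Then the dual `W^*` is not isomorphic to `η ⊗ W` for any character
`η : G → ℂˣ`. -/
theorem dual_not_twist_of_semidirect_product_rep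
    (p : ℕ) [Fact p.Prime] (hodd : Odd p)
    (V : Type) [AddCommGroup V] [Module (ZMod p) V] [FiniteDimensional (ZMod p) V]
    (hdim : 1 < Module.finrank (ZMod p) V)
    (u : V ≃ₗ[ZMod p] V) (m : ℕ) (hm : Odd m) (hord : orderOf u = m)
    (hfix : ∀ v : V, u v = v → v = 0)
    (φ : Multiplicative (ZMod m) →* MulAut (Multiplicative V))
    (hφ : ∀ v : V,
      φ (Multiplicative.ofAdd (1 : ZMod m)) (Multiplicative.ofAdd v) =
        Multiplicative.ofAdd (u v))
    (χ : Multiplicative V →* ℂˣ) (hχ : χ ≠ 1)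
    (W : Type) [AddCommGroup W] [Module ℂ W] [FiniteDimensional ℂ W] [Nontrivial W]
    (ρ : Representation ℂ (Multiplicative V ⋊[φ] Multiplicative (ZMod m)) W)
    (hirr : ∀ U : Submodule ℂ W,
      (∀ g : Multiplicative V ⋊[φ] Multiplicative (ZMod m), ∀ x ∈ U, ρ g x ∈ U) →
      U = ⊥ ∨ U = ⊤)
    (hw : ∃ w : W, w ≠ 0 ∧ ∀ v : V,
      ρ (SemidirectProduct.inl (Multiplicative.ofAdd v)) w =
        (χ (Multiplicative.ofAdd v) : ℂ) • w) :
    ∀ η : (Multiplicative V ⋊[φ] Multiplicative (ZMod m)) →* ℂˣ,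
      ¬ ∃ e : Module.Dual ℂ W ≃ₗ[ℂ] W,
        ∀ (g : Multiplicative V ⋊[φ] Multiplicative (ZMod m)) (f : Module.Dual ℂ W),
          e (ρ.dual g f) = (η g : ℂ) • ρ g (e f) :=
  dual_not_twist_of_semidirect_product_rep_general p hodd V u m hm hfix φ hφ χ hχ W ρ hirr hw
end
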